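/- Let R be a J-Noetherian Bezout domain which does not have stable range 1. Then R contains a nonzero nonunit adequate element. -/

import Mathlib

/-!
Failure of stable range one gives a nonzero nonunit, so by the ascending chain condition some
nonzero nonunit `a` has a maximal `J`-radical `J(aR)` among all such elements. In a Bezout ring
this forces `a` into a single maximal ideal `M`: if `a ∈ N ≠ M`, pick `c ∈ M \ N`; the generator
`g` of `aR + cR` is a nonzero nonunit with `J(aR) ≤ J(gR)`, hence `g ∈ J(gR) = J(aR) ⊆ N`, so
`c ∈ N`. An element lying in a unique maximal ideal `M` is adequate: for `b ∈ M` take `r = 1`,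
and for `b ∉ M` take `s = 1`.
-/

/-- A commutative ring is `J`-Noetherian if it satisfies the ascending chain condition
on `J`-radical ideals, i.e. ideals that equal the intersection of all maximal ideals
containing them (equivalently, ideals fixed by `Ideal.jacobson`). -/
def IsJNoetherian (R : Type*) [CommRing R] : Prop :=
  ∀ f : ℕ →o Ideal R, (∀ n, (f n).jacobson = f n) → ∃ n, ∀ m, n ≤ m → f m = f n

/-- A commutative ring has stable range 1 if whenever `aR + bR = R` there is `t` with
`a + b * t` a unit. -/
def HasStableRangeOne (R : Type*) [CommRing R] : Prop :=
  ∀ a b : R, Ideal.span {a} + Ideal.span {b} = ⊤ → ∃ t : R, IsUnit (a + b * t)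

/-- An element `a` of a commutative ring is adequate if for every `b` there exist `r, s`
with `a = r * s`, `rR + bR = R`, and `s'R + bR ≠ R` for every nonunit `s'` with
`sR ⊆ s'R`. -/
def IsAdequateElement {R : Type*} [CommRing R] (a : R) : Prop :=
  ∀ b : R, ∃ r s : R, a = r * s ∧
    Ideal.span {r} + Ideal.span {b} = ⊤ ∧
    ∀ s' : R, ¬IsUnit s' → Ideal.span {s} ≤ Ideal.span ({s'} : Set R) →
      Ideal.span {s'} + Ideal.span {b} ≠ ⊤

theorem IsJNoetherian.wellFoundedGT {R : Type*} [CommRing R] (hJ : IsJNoetherian R) :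
    WellFoundedGT {I : Ideal R // I.jacobson = I} := by
  rw [wellFoundedGT_iff_monotone_chain_condition]
  intro f
  obtain ⟨n, hn⟩ := hJ ((OrderHom.Subtype.val _).comp f) fun n => (f n).2
  exact ⟨n, fun m hm => Subtype.ext (hn m hm).symm⟩

theorem IsJNoetherian.exists_maximalFor {R ι : Type*} [CommRing R] (hJ : IsJNoetherian R)
    (P : ι → Prop) (f : ι → Ideal R) (hf : ∀ i, (f i).jacobson = f i) (hP : ∃ i, P i) :
    ∃ i, MaximalFor P f i :=
  haveI := hJ.wellFoundedGT
  exists_maximalFor_of_wellFoundedGT P (fun i => (⟨f i, hf i⟩ : {I : Ideal R // I.jacobson = I}))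
    hP

theorem exists_ne_zero_not_isUnit_of_not_hasStableRangeOne {R : Type*} [CommRing R]
    (hsr : ¬HasStableRangeOne R) : ∃ a : R, a ≠ 0 ∧ ¬IsUnit a := by
  by_contra! hunit
  refine hsr fun a b hab => ?_
  by_cases ha : a = 0
  · subst ha
    refine ⟨1, ?_⟩
    rw [Ideal.span_singleton_eq_bot.mpr rfl, Submodule.add_eq_sup, bot_sup_eq,
      Ideal.span_singleton_eq_top] at hab
    simpa using hab
  · exact ⟨0, by simpa using hunit a ha⟩

theorem span_singleton_add_span_singleton_eq_top_iff {R : Type*} [CommRing R] {x y : R} :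
    Ideal.span {x} + Ideal.span {y} = ⊤ ↔ ∀ N : Ideal R, N.IsMaximal → x ∈ N → y ∉ N := by
  rw [Submodule.add_eq_sup]
  constructor
  · intro h N hN hx hy
    refine hN.ne_top (top_le_iff.mp ?_)
    rw [← h, sup_le_iff, Ideal.span_singleton_le_iff_mem, Ideal.span_singleton_le_iff_mem]
    exact ⟨hx, hy⟩
  · intro h
    by_contra hne
    obtain ⟨N, hN, hle⟩ := Ideal.exists_le_maximal _ hne
    rw [sup_le_iff, Ideal.span_singleton_le_iff_mem, Ideal.span_singleton_le_iff_mem] at hle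
    exact h N hN hle.1 hle.2

theorem isAdequateElement_of_forall_isMaximal_eq {R : Type*} [CommRing R] {a : R}
    {M : Ideal R} (huniq : ∀ N : Ideal R, N.IsMaximal → a ∈ N → N = M) :
    IsAdequateElement a := by
  intro b
  by_cases hbM : b ∈ M
  · refine ⟨1, a, (one_mul a).symm, by simp [Ideal.span_singleton_one], ?_⟩
    intro s' hs' hle
    obtain ⟨N, hN, hsN⟩ := Ideal.exists_le_maximal (Ideal.span {s'})
      (by simpa [Ideal.span_singleton_eq_top] using hs')
    have haN : a ∈ N := (Ideal.span_singleton_le_iff_mem _).mp (hle.trans hsN)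
    rw [Ideal.span_singleton_le_iff_mem] at hsN
    rw [Ne, span_singleton_add_span_singleton_eq_top_iff]
    exact fun h => h N hN hsN (huniq N hN haN ▸ hbM)
  · refine ⟨a, 1, (mul_one a).symm, ?_, ?_⟩
    · rw [span_singleton_add_span_singleton_eq_top_iff]
      exact fun N hN haN => huniq N hN haN ▸ hbM
    · intro s' hs' hle
      rw [Ideal.span_singleton_one, top_le_iff, Ideal.span_singleton_eq_top] at hle
      exact absurd hle hs'

theorem IsBezout.eq_of_maximalFor_jacobson_span {R : Type*} [CommRing R] [IsBezout R] {a : R}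
    (ha : MaximalFor (fun x : R => x ≠ 0 ∧ ¬IsUnit x) (fun x => (Ideal.span {x}).jacobson) a)
    {M N : Ideal R} (hM : M.IsMaximal) (hN : N.IsMaximal) (haM : a ∈ M) (haN : a ∈ N) :
    N = M := by
  by_contra hNM
  obtain ⟨c, hcM, hcN⟩ : ∃ c ∈ M, c ∉ N :=
    SetLike.not_le_iff_exists.mp fun hle => hNM (hM.eq_of_le hN.ne_top hle).symm
  set g := IsBezout.gcd a c
  have hspan : Ideal.span {g} = Ideal.span {a, c} := IsBezout.span_gcd a c
  have hag : Ideal.span {a} ≤ Ideal.span {g} := by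
    rw [hspan]
    exact Ideal.span_mono (Set.singleton_subset_iff.mpr (Set.mem_insert a _))
  have hg0 : g ≠ 0 := by
    rintro hg
    rw [hg, Ideal.span_singleton_le_iff_mem, Ideal.mem_span_singleton, zero_dvd_iff] at hag
    exact ha.1.1 hag
  have hgu : ¬IsUnit g := by
    rw [← Ideal.span_singleton_eq_top, hspan]
    refine fun htop => hM.ne_top (top_le_iff.mp (htop ▸ ?_))
    rw [Ideal.span_le, Set.insert_subset_iff, Set.singleton_subset_iff]
    exact ⟨haM, hcM⟩
  have hjac : (Ideal.span {g}).jacobson ≤ (Ideal.span {a}).jacobson :=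
    ha.2 ⟨hg0, hgu⟩ (Ideal.jacobson_mono hag)
  have hjacN : (Ideal.span {a}).jacobson ≤ N :=
    sInf_le ⟨(Ideal.span_singleton_le_iff_mem _).mpr haN, hN⟩
  have hgN : g ∈ N := (hjac.trans hjacN) (Ideal.le_jacobson (Ideal.mem_span_singleton_self g))
  have hcg : c ∈ Ideal.span {g} := hspan ▸ Ideal.subset_span (Set.mem_insert_of_mem _ rfl)
  exact hcN (((Ideal.span_singleton_le_iff_mem _).mpr hgN) hcg)

theorem exists_adequate_of_jNoetherian_not_sr1_general (R : Type*) [CommRing R]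
    [IsBezout R] (hJ : IsJNoetherian R) (hsr : ¬HasStableRangeOne R) :
    ∃ a : R, a ≠ 0 ∧ ¬IsUnit a ∧ IsAdequateElement a := by
  obtain ⟨a, ha⟩ := hJ.exists_maximalFor (fun x : R => x ≠ 0 ∧ ¬IsUnit x)
    (fun x => (Ideal.span {x}).jacobson) (fun _ => Ideal.jacobson_idem)
    (exists_ne_zero_not_isUnit_of_not_hasStableRangeOne hsr)
  obtain ⟨M, hM, haM⟩ := Ideal.exists_le_maximal (Ideal.span {a})
    (by simpa [Ideal.span_singleton_eq_top] using ha.1.2)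
  rw [Ideal.span_singleton_le_iff_mem] at haM
  exact ⟨a, ha.1.1, ha.1.2, isAdequateElement_of_forall_isMaximal_eq fun N hN haN =>
    IsBezout.eq_of_maximalFor_jacobson_span ha hM hN haM haN⟩

theorem exists_adequate_of_jNoetherian_not_sr1 (R : Type*) [CommRing R] [IsDomain R]
    [IsBezout R] (hJ : IsJNoetherian R) (hsr : ¬HasStableRangeOne R) :
    ∃ a : R, a ≠ 0 ∧ ¬IsUnit a ∧ IsAdequateElement a :=
  exists_adequate_of_jNoetherian_not_sr1_general R hJ hsr
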